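/- Let π: Γ̃ → Γ be an edge-free harmonic double cover of metric graphs, and for a subgraph Γ₀ of Γ set g̃(Γ₀) = #E(Γ₀) − #{undilated vertices of Γ₀}. Then: (i) for every connected subgraph Γ₀, g̃(Γ₀) = g(Γ₀) − 1 + #(dilated vertices of Γ₀) ≥ −1; and (ii) for every set F ⊂ E(Γ) of h = g(Γ̃) − g(Γ) undilated edges with connected component decomposition Γ∖F = Γ₁ ∪ ⋯ ∪ Γ_k, one has Σᵢ g̃(Γᵢ) = 0, so either g̃(Γᵢ) = −1 for some i or g̃(Γᵢ) = 0 for all i. -/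

import Mathlib

open scoped Classical
noncomputable section

/-- A (model of a) metric graph: a finite (multi)graph with oriented edges
and positive edge lengths. -/
structure MetricGraph where
  V : Type
  E : Type
  [fintV : Fintype V]
  [fintE : Fintype E]
  s : E → V
  t : E → V
  len : E → ℝ
  len_pos : ∀ e, 0 < len e

attribute [instance] MetricGraph.fintV MetricGraph.fintE

namespace MetricGraph

/-- Two vertices are adjacent if some edge joins them. -/
def Adj (G : MetricGraph) (u v : G.V) : Prop :=
  ∃ e : G.E, (G.s e = u ∧ G.t e = v) ∨ (G.s e = v ∧ G.t e = u)

/-- Reachability by walks. -/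
def Reach (G : MetricGraph) : G.V → G.V → Prop :=
  Relation.ReflTransGen G.Adj

/-- A graph is connected if it is nonempty and any two vertices are joined by a walk. -/
def Connected (G : MetricGraph) : Prop :=
  Nonempty G.V ∧ ∀ u v : G.V, G.Reach u v

/-- The genus (first Betti number) of a connected graph: #E - #V + 1. -/
def genus (G : MetricGraph) : ℤ :=
  (Fintype.card G.E : ℤ) - (Fintype.card G.V : ℤ) + 1

/-- The number of connected components. -/
def numComponents (G : MetricGraph) : ℕ :=
  Nat.card (Quot G.Reach)

/-- A tree is a connected graph with #V = #E + 1. -/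
def IsTree (G : MetricGraph) : Prop :=
  G.Connected ∧ Fintype.card G.E + 1 = Fintype.card G.V

/-- A loop is an edge whose endpoints coincide. -/
def IsLoop (G : MetricGraph) (e : G.E) : Prop := G.s e = G.t e

/-- Delete a set of edges. -/
def deleteEdges (G : MetricGraph) (F : Set G.E) : MetricGraph where
  V := G.V
  E := {e : G.E // e ∉ F}
  fintV := G.fintV
  fintE := Fintype.ofFinite _
  s e := G.s e.1
  t e := G.t e.1
  len e := G.len e.1
  len_pos e := G.len_pos e.1

/-- A bridge is an edge whose deletion disconnects the graph. -/
def IsBridge (G : MetricGraph) (e : G.E) : Prop :=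
  ¬ (G.deleteEdges {e}).Connected

/-- Contract a set of edges: identify the endpoints of each edge of `F` and
remove the edges of `F`. -/
def contractEdges (G : MetricGraph) (F : Set G.E) : MetricGraph where
  V := Quot (fun u v : G.V => ∃ e ∈ F, G.s e = u ∧ G.t e = v)
  E := {e : G.E // e ∉ F}
  fintV := Fintype.ofFinite _
  fintE := Fintype.ofFinite _
  s e := Quot.mk _ (G.s e.1)
  t e := Quot.mk _ (G.t e.1)
  len e := G.len e.1
  len_pos e := G.len_pos e.1

/-- The subgraph induced on a set of vertices (with all edges joining them). -/
def inducedOn (G : MetricGraph) (S : Set G.V) : MetricGraph where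
  V := {v : G.V // v ∈ S}
  E := {e : G.E // G.s e ∈ S ∧ G.t e ∈ S}
  fintV := Fintype.ofFinite _
  fintE := Fintype.ofFinite _
  s e := ⟨G.s e.1, e.2.1⟩
  t e := ⟨G.t e.1, e.2.2⟩
  len e := G.len e.1
  len_pos e := G.len_pos e.1

/-- The connected component of a vertex, as a set of vertices. -/
def componentOf (G : MetricGraph) (v : G.V) : Set G.V := {u : G.V | G.Reach v u}

/-- The Jacobian polynomial of a metric graph: the sum, over all `g`-element
sets `C` of edges whose complement is a spanning tree, of the product of the
lengths of the edges of `C`. -/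
def jacPoly (G : MetricGraph) : ℝ :=
  ∑ C : Finset G.E,
    if (C.card : ℤ) = G.genus ∧ (G.deleteEdges (↑C)).IsTree then ∏ e ∈ C, G.len e else 0

end MetricGraph

/-- A harmonic double cover of metric graphs, encoded by the projection
together with its deck involution.  A vertex or edge downstairs is *dilated*
if its fiber is a single (involution-fixed) point; dilated edges have
half the length of their image. -/
structure DoubleCover (Gt G : MetricGraph) where
  πV : Gt.V → G.V
  πE : Gt.E → G.E
  ιV : Gt.V → Gt.V
  ιE : Gt.E → Gt.E
  ιV_invol : ∀ w, ιV (ιV w) = w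
  ιE_invol : ∀ f, ιE (ιE f) = f
  πV_ι : ∀ w, πV (ιV w) = πV w
  πE_ι : ∀ f, πE (ιE f) = πE f
  s_comm : ∀ f, G.s (πE f) = πV (Gt.s f)
  t_comm : ∀ f, G.t (πE f) = πV (Gt.t f)
  s_ι : ∀ f, Gt.s (ιE f) = ιV (Gt.s f)
  t_ι : ∀ f, Gt.t (ιE f) = ιV (Gt.t f)
  πV_surj : Function.Surjective πV
  πE_surj : Function.Surjective πE
  fiberV : ∀ w w', πV w' = πV w → w' = w ∨ w' = ιV w
  fiberE : ∀ f f', πE f' = πE f → f' = f ∨ f' = ιE f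
  len_eq : ∀ f, Gt.len f = if ιE f = f then G.len (πE f) / 2 else G.len (πE f)

namespace DoubleCover

variable {Gt G : MetricGraph} (dc : DoubleCover Gt G)

/-- A vertex of the base is dilated if it has a unique (involution-fixed) preimage. -/
def dilatedV (v : G.V) : Prop := ∃ w, dc.πV w = v ∧ dc.ιV w = w

/-- An edge of the base is dilated if it has a unique (involution-fixed) preimage. -/
def dilatedE (e : G.E) : Prop := ∃ f, dc.πE f = e ∧ dc.ιE f = f

/-- A double cover is free if it has no dilated vertices (hence no dilated edges). -/
def IsFree : Prop := ∀ v : G.V, ¬ dc.dilatedV v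

/-- A double cover is dilated if it has a dilated vertex. -/
def IsDilated : Prop := ∃ v : G.V, dc.dilatedV v

/-- A double cover is edge-free if its dilation subgraph consists of isolated
vertices only, i.e. there are no dilated edges. -/
def IsEdgeFree : Prop := ∀ e : G.E, ¬ dc.dilatedE e

/-- The dilation subgraph: the subgraph of the base consisting of all dilated
vertices and dilated edges. -/
def dilSubgraph : MetricGraph where
  V := {v : G.V // dc.dilatedV v}
  E := {e : G.E // dc.dilatedE e}
  fintV := Fintype.ofFinite _
  fintE := Fintype.ofFinite _
  s e := ⟨G.s e.1, by
    obtain ⟨f, hf, hfix⟩ := e.2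
    exact ⟨Gt.s f, by rw [← hf, dc.s_comm], by rw [← dc.s_ι, hfix]⟩⟩
  t e := ⟨G.t e.1, by
    obtain ⟨f, hf, hfix⟩ := e.2
    exact ⟨Gt.t f, by rw [← hf, dc.t_comm], by rw [← dc.t_ι, hfix]⟩⟩
  len e := G.len e.1
  len_pos e := G.len_pos e.1

/-- The number of dilated edges. -/
def md : ℕ := Nat.card {e : G.E // dc.dilatedE e}

/-- The number of dilated vertices. -/
def nd : ℕ := Nat.card {v : G.V // dc.dilatedV v}

/-- The number of connected components of the dilation subgraph. -/
def numDilComponents : ℕ := dc.dilSubgraph.numComponents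

/-- The connected component of `v` in `Γ ∖ F` has connected preimage in `Γ̃ ∖ π⁻¹(F)`. -/
def hasConnPreimage (F : Set G.E) (v : G.V) : Prop :=
  ((Gt.deleteEdges (dc.πE ⁻¹' F)).inducedOn
    {w : Gt.V | dc.πV w ∈ (G.deleteEdges F).componentOf v}).Connected

/-- An ogod (odd genus one decomposition): a set of `h = g(Γ̃) - g(Γ)` undilated
edges of the base such that every connected component of the complement has
connected preimage. -/
def IsOgod (F : Finset G.E) : Prop :=
  (F.card : ℤ) = Gt.genus - G.genus ∧
  (∀ e ∈ F, ¬ dc.dilatedE e) ∧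
  ∀ v : G.V, dc.hasConnPreimage (↑F) v

/-- The rank of an ogod: the number of connected components of `Γ ∖ F`. -/
def rank (_π : DoubleCover Gt G) (F : Finset G.E) : ℕ := (G.deleteEdges (↑F)).numComponents

/-- The Prym polynomial of a double cover. -/
def prymPoly : ℝ :=
  ∑ F : Finset G.E,
    if dc.IsOgod F then (4 : ℝ) ^ (dc.rank F - 1) * ∏ e ∈ F, G.len e else 0

end DoubleCover

namespace MetricGraph

/-- A subgraph of `G` given by a vertex set `S` and an edge set `T` whose
endpoints lie in `S`. -/
def subgraphOn (G : MetricGraph) (S : Set G.V) (T : Set G.E)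
    (hs : ∀ e ∈ T, G.s e ∈ S) (ht : ∀ e ∈ T, G.t e ∈ S) : MetricGraph where
  V := {v : G.V // v ∈ S}
  E := {e : G.E // e ∈ T}
  fintV := Fintype.ofFinite _
  fintE := Fintype.ofFinite _
  s e := ⟨G.s e.1, hs e.1 e.2⟩
  t e := ⟨G.t e.1, ht e.1 e.2⟩
  len e := G.len e.1
  len_pos e := G.len_pos e.1

/-- The vertex set of the connected component of `v` in `Γ ∖ F`. -/
def compV (G : MetricGraph) (F : Set G.E) (v : G.V) : Set G.V :=
  (G.deleteEdges F).componentOf v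

/-- The edge set of the connected component of `v` in `Γ ∖ F`. -/
def compE (G : MetricGraph) (F : Set G.E) (v : G.V) : Set G.E :=
  {e : G.E | e ∉ F ∧ G.s e ∈ G.compV F v ∧ G.t e ∈ G.compV F v}

end MetricGraph

namespace DoubleCover

variable {Gt G : MetricGraph} (dc : DoubleCover Gt G)

/-- For a subgraph `(S, T)` of the base of a double cover,
`g̃(Γ₀) = #E(Γ₀) - #{undilated vertices of Γ₀}`. -/
def gtilde (S : Set G.V) (T : Set G.E) : ℤ :=
  (Nat.card T : ℤ) - (Nat.card ({v : G.V | v ∈ S ∧ ¬ dc.dilatedV v}) : ℤ)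

end DoubleCover


/-! (i) is bookkeeping: `#V(Γ₀)` splits into undilated and dilated vertices, and a connected
graph has genus `≥ 0`. For (ii), in an edge-free double cover every edge and every undilated
vertex has two preimages and every dilated vertex one, so `g(Γ̃) - g(Γ) = #E(Γ) - #{undilated
vertices}`. Hence `#(E(Γ) ∖ F)` is the number of undilated vertices, and since the components of
`Γ ∖ F` partition both the edges outside `F` and the vertices, the `g̃(Γᵢ)` sum to `0`. As each
`g̃(Γᵢ) ≥ -1`, either one of them is `-1` or all vanish. -/

lemma Nat.card_eq_sum_card_preimage_singleton {X Y : Type*} [Finite X] [Fintype Y]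
    (p : X → Y) : Nat.card X = ∑ y, Nat.card (p ⁻¹' {y}) := by
  rw [← Nat.card_congr (Equiv.sigmaFiberEquiv p), Nat.card_sigma]
  rfl

lemma Set.preimage_singleton_eq_pair_of_fiber {X Y : Type*} {p : X → Y} {ι : X → X}
    (hι : ∀ x, p (ι x) = p x) (hfiber : ∀ x x', p x' = p x → x' = x ∨ x' = ι x) (x : X) :
    p ⁻¹' {p x} = {x, ι x} := by
  ext x'
  refine ⟨hfiber x x', ?_⟩
  rintro (rfl | rfl)
  · rfl
  · exact hι x

lemma Finset.sum_nat_card_subtype_of_existsUnique {α β : Type*} [Fintype α] {R : Finset β}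
    {p : α → Prop} {r : α → β → Prop} (h : ∀ a, p a → ∃! b, b ∈ R ∧ r a b) :
    ∑ b ∈ R, Nat.card {a // p a ∧ r a b} = Nat.card {a // p a} := by
  have hcount (a : α) : ∑ b ∈ R, (if p a ∧ r a b then 1 else 0) = if p a then 1 else 0 := by
    by_cases ha : p a
    · obtain ⟨b₀, ⟨hb₀R, hb₀⟩, huniq⟩ := h a ha
      rw [if_pos ha, Finset.sum_eq_single_of_mem b₀ hb₀R
        fun b hb hne => if_neg fun hab => hne (huniq b ⟨hb, hab.2⟩), if_pos ⟨ha, hb₀⟩]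
    · simp [ha]
  simp only [Nat.card_eq_fintype_card, Fintype.card_subtype, Finset.card_filter]
  rw [Finset.sum_comm]
  simp only [hcount]

lemma Finset.exists_eq_neg_one_or_forall_eq_zero {ι : Type*} {s : Finset ι} {f : ι → ℤ}
    (hf : ∀ i ∈ s, -1 ≤ f i) (hsum : ∑ i ∈ s, f i = 0) :
    (∃ i ∈ s, f i = -1) ∨ ∀ i ∈ s, f i = 0 := by
  refine or_iff_not_imp_left.2 fun hne => ?_
  push Not at hne
  have hnonneg : ∀ i ∈ s, 0 ≤ f i := fun i hi => by
    have := hf i hi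
    have := hne i hi
    omega
  exact (Finset.sum_eq_zero_iff_of_nonneg hnonneg).1 hsum

namespace MetricGraph

variable {G : MetricGraph}

def toSimpleGraph (G : MetricGraph) : SimpleGraph G.V :=
  SimpleGraph.fromEdgeSet (Set.range fun e => s(G.s e, G.t e))

lemma reachable_toSimpleGraph : G.toSimpleGraph.Reachable = G.Reach := by
  rw [toSimpleGraph, SimpleGraph.reachable_fromEdgeSet_eq_reflTransGen_toRel, Reach]
  congr 1
  ext u v
  simp [Adj]

lemma Reach.symm {u v : G.V} (h : G.Reach u v) : G.Reach v u := by
  rw [← reachable_toSimpleGraph] at h ⊢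
  exact h.symm

lemma card_edgeSet_toSimpleGraph_le : Nat.card G.toSimpleGraph.edgeSet ≤ Nat.card G.E :=
  calc Nat.card G.toSimpleGraph.edgeSet
      ≤ Nat.card (Set.range fun e => s(G.s e, G.t e)) := by
        rw [toSimpleGraph, SimpleGraph.edgeSet_fromEdgeSet]
        exact Nat.card_mono (Set.finite_range _) Set.sdiff_subset
    _ ≤ Nat.card G.E := Finite.card_range_le _

lemma Connected.toSimpleGraph (hG : G.Connected) : G.toSimpleGraph.Connected := by
  obtain ⟨hne, hreach⟩ := hG
  rw [SimpleGraph.connected_iff]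
  refine ⟨fun u v => ?_, hne⟩
  rw [reachable_toSimpleGraph]
  exact hreach u v

lemma Connected.card_V_le_card_E_add_one (hG : G.Connected) :
    Nat.card G.V ≤ Nat.card G.E + 1 :=
  hG.toSimpleGraph.card_vert_le_card_edgeSet_add_one.trans
    (Nat.add_le_add_right card_edgeSet_toSimpleGraph_le 1)

lemma genus_eq : G.genus = (Nat.card G.E : ℤ) - Nat.card G.V + 1 := by
  simp only [genus, Nat.card_eq_fintype_card]

lemma genus_nonneg (hG : G.Connected) : 0 ≤ G.genus := by
  have := hG.card_V_le_card_E_add_one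
  rw [genus_eq]
  omega

lemma genus_subgraphOn (S : Set G.V) (T : Set G.E)
    (hs : ∀ e ∈ T, G.s e ∈ S) (ht : ∀ e ∈ T, G.t e ∈ S) :
    (G.subgraphOn S T hs ht).genus = (Nat.card T : ℤ) - Nat.card S + 1 :=
  genus_eq

section Components

variable {F : Set G.E}

lemma mem_compE_iff {v : G.V} {e : G.E} :
    e ∈ G.compE F v ↔ e ∉ F ∧ G.s e ∈ G.compV F v :=
  ⟨fun h => ⟨h.1, h.2.1⟩, fun h => ⟨h.1, h.2, h.2.tail ⟨⟨e, h.1⟩, .inl ⟨rfl, rfl⟩⟩⟩⟩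

lemma connected_subgraphOn_comp (v : G.V)
    (hs : ∀ e ∈ G.compE F v, G.s e ∈ G.compV F v)
    (ht : ∀ e ∈ G.compE F v, G.t e ∈ G.compV F v) :
    (G.subgraphOn (G.compV F v) (G.compE F v) hs ht).Connected := by
  set H := G.subgraphOn (G.compV F v) (G.compE F v) hs ht
  have hv : v ∈ G.compV F v := Relation.ReflTransGen.refl
  have reach_of_mem (u : G.V) (hu : (G.deleteEdges F).Reach v u) :
      H.Reach ⟨v, hv⟩ ⟨u, hu⟩ := by
    induction hu with
    | refl => exact .refl
    | @tail b c hb hbc ih =>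
      obtain ⟨f, hf⟩ := hbc
      have hc : c ∈ G.compV F v := hb.tail ⟨f, hf⟩
      have hfT : f.1 ∈ G.compE F v :=
        mem_compE_iff.2 ⟨f.2, by
          rcases hf with ⟨h, -⟩ | ⟨h, -⟩
          · rwa [show G.s f.1 = b from h]
          · rwa [show G.s f.1 = c from h]⟩
      exact ih.tail ⟨⟨f.1, hfT⟩, hf.imp (fun h => ⟨Subtype.ext h.1, Subtype.ext h.2⟩)
        (fun h => ⟨Subtype.ext h.1, Subtype.ext h.2⟩)⟩
  exact ⟨⟨⟨v, hv⟩⟩, fun ⟨x, hx⟩ ⟨y, hy⟩ => (reach_of_mem x hx).symm.trans (reach_of_mem y hy)⟩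

lemma sum_card_compV {R : Finset G.V} (hR : ∀ u, ∃! v, v ∈ R ∧ (G.deleteEdges F).Reach v u)
    (p : G.V → Prop) :
    ∑ v ∈ R, Nat.card {u | u ∈ G.compV F v ∧ p u} = Nat.card {u // p u} := by
  refine (Finset.sum_congr rfl fun v _ => ?_).trans
    (Finset.sum_nat_card_subtype_of_existsUnique fun u _ => hR u)
  exact Nat.card_congr (Equiv.subtypeEquivRight fun _ => and_comm)

lemma sum_card_compE {R : Finset G.V} (hR : ∀ u, ∃! v, v ∈ R ∧ (G.deleteEdges F).Reach v u) :
    ∑ v ∈ R, Nat.card (G.compE F v) = Nat.card {e // e ∉ F} := by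
  refine (Finset.sum_congr rfl fun v _ => ?_).trans
    (Finset.sum_nat_card_subtype_of_existsUnique fun e _ => hR (G.s e))
  exact Nat.card_congr (Equiv.subtypeEquivRight fun _ => mem_compE_iff)

end Components

end MetricGraph

namespace DoubleCover

variable {Gt G : MetricGraph} (dc : DoubleCover Gt G)

lemma gtilde_eq_genus_sub_one_add (S : Set G.V) (T : Set G.E)
    (hs : ∀ e ∈ T, G.s e ∈ S) (ht : ∀ e ∈ T, G.t e ∈ S) :
    dc.gtilde S T = (G.subgraphOn S T hs ht).genus - 1
      + (Nat.card ({v : G.V | v ∈ S ∧ dc.dilatedV v}) : ℤ) := by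
  have hsplit : Nat.card {v : G.V | v ∈ S ∧ dc.dilatedV v}
      + Nat.card {v : G.V | v ∈ S ∧ ¬ dc.dilatedV v} = Nat.card S :=
    Set.ncard_inter_add_ncard_sdiff_eq_ncard S {v | dc.dilatedV v}
  rw [gtilde, MetricGraph.genus_subgraphOn, ← hsplit]
  push_cast
  ring

lemma neg_one_le_gtilde {S : Set G.V} {T : Set G.E}
    {hs : ∀ e ∈ T, G.s e ∈ S} {ht : ∀ e ∈ T, G.t e ∈ S}
    (hconn : (G.subgraphOn S T hs ht).Connected) : -1 ≤ dc.gtilde S T := by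
  rw [dc.gtilde_eq_genus_sub_one_add S T hs ht]
  have := MetricGraph.genus_nonneg hconn
  omega

lemma card_fiber_πE (hef : dc.IsEdgeFree) (e : G.E) : Nat.card (dc.πE ⁻¹' {e}) = 2 := by
  obtain ⟨f, rfl⟩ := dc.πE_surj e
  rw [Set.preimage_singleton_eq_pair_of_fiber dc.πE_ι dc.fiberE, Nat.card_coe_set_eq,
    Set.ncard_pair fun h => hef _ ⟨f, rfl, h.symm⟩]

lemma card_fiber_πV (v : G.V) :
    Nat.card (dc.πV ⁻¹' {v}) = if dc.dilatedV v then 1 else 2 := by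
  obtain ⟨w, rfl⟩ := dc.πV_surj v
  rw [Set.preimage_singleton_eq_pair_of_fiber dc.πV_ι dc.fiberV, Nat.card_coe_set_eq]
  by_cases hw : dc.ιV w = w
  · rw [hw, Set.pair_eq_singleton, Set.ncard_singleton, if_pos ⟨w, rfl, hw⟩]
  · have hundil : ¬ dc.dilatedV (dc.πV w) := by
      rintro ⟨w', hw', hfix⟩
      rcases dc.fiberV w w' hw' with rfl | rfl
      · exact hw hfix
      · exact hw (by rw [← hfix, dc.ιV_invol])
    rw [Set.ncard_pair (Ne.symm hw), if_neg hundil]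

lemma card_E_eq_two_mul (hef : dc.IsEdgeFree) : Nat.card Gt.E = 2 * Nat.card G.E := by
  rw [Nat.card_eq_sum_card_preimage_singleton dc.πE]
  simp only [dc.card_fiber_πE hef, Finset.sum_const, Finset.card_univ, smul_eq_mul,
    Nat.card_eq_fintype_card, mul_comm]

lemma card_V_eq_add : Nat.card Gt.V = Nat.card G.V + Nat.card {v // ¬ dc.dilatedV v} := by
  rw [Nat.card_eq_sum_card_preimage_singleton dc.πV]
  have hsplit (v : G.V) :
      (if dc.dilatedV v then 1 else 2) = 1 + if ¬ dc.dilatedV v then 1 else 0 := by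
    split_ifs <;> rfl
  simp only [dc.card_fiber_πV, hsplit, Finset.sum_add_distrib, Finset.sum_boole,
    Finset.sum_const, Finset.card_univ, smul_eq_mul, mul_one, Nat.card_eq_fintype_card,
    Fintype.card_subtype, Nat.cast_id]

lemma genus_sub_genus (hef : dc.IsEdgeFree) :
    Gt.genus - G.genus = (Nat.card G.E : ℤ) - Nat.card {v // ¬ dc.dilatedV v} := by
  rw [MetricGraph.genus_eq, MetricGraph.genus_eq, dc.card_E_eq_two_mul hef, dc.card_V_eq_add]
  push_cast
  ring

lemma sum_gtilde_comp (hef : dc.IsEdgeFree) {F : Finset G.E}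
    (hF : (F.card : ℤ) = Gt.genus - G.genus) {R : Finset G.V}
    (hR : ∀ u, ∃! v, v ∈ R ∧ (G.deleteEdges (↑F)).Reach v u) :
    ∑ v ∈ R, dc.gtilde (G.compV (↑F) v) (G.compE (↑F) v) = 0 := by
  have hcompl : Nat.card {e // e ∉ (↑F : Set G.E)} + F.card = Nat.card G.E := by
    rw [add_comm, ← Set.ncard_coe_finset]
    exact Set.ncard_add_ncard_compl _
  simp only [gtilde, Finset.sum_sub_distrib, ← Nat.cast_sum]
  rw [MetricGraph.sum_card_compE hR, MetricGraph.sum_card_compV hR]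
  rw [dc.genus_sub_genus hef, ← hcompl] at hF
  push_cast at hF ⊢
  linarith

end DoubleCover

theorem gtilde_of_edgeFree_general
    (Gt G : MetricGraph) (dc : DoubleCover Gt G)
    (hef : dc.IsEdgeFree) :
    (∀ (S : Set G.V) (T : Set G.E)
        (hs : ∀ e ∈ T, G.s e ∈ S) (ht : ∀ e ∈ T, G.t e ∈ S),
      (G.subgraphOn S T hs ht).Connected →
        dc.gtilde S T = (G.subgraphOn S T hs ht).genus - 1
            + (Nat.card ({v : G.V | v ∈ S ∧ dc.dilatedV v}) : ℤ) ∧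
        (-1 : ℤ) ≤ dc.gtilde S T) ∧
    (∀ F : Finset G.E,
      (F.card : ℤ) = Gt.genus - G.genus → (∀ e ∈ F, ¬ dc.dilatedE e) →
      ∀ R : Finset G.V,
        (∀ u : G.V, ∃! v : G.V, v ∈ R ∧ (G.deleteEdges (↑F)).Reach v u) →
        (∑ v ∈ R, dc.gtilde (G.compV (↑F) v) (G.compE (↑F) v)) = 0 ∧
        ((∃ v ∈ R, dc.gtilde (G.compV (↑F) v) (G.compE (↑F) v) = -1) ∨
          ∀ v ∈ R, dc.gtilde (G.compV (↑F) v) (G.compE (↑F) v) = 0)) := by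
  refine ⟨fun S T hs ht hconn =>
    ⟨dc.gtilde_eq_genus_sub_one_add S T hs ht, dc.neg_one_le_gtilde hconn⟩, ?_⟩
  intro F hF _ R hR
  have hsum := dc.sum_gtilde_comp hef hF hR
  refine ⟨hsum, Finset.exists_eq_neg_one_or_forall_eq_zero (fun v _ => ?_) hsum⟩
  exact dc.neg_one_le_gtilde
    (G.connected_subgraphOn_comp v (fun _ he => he.2.1) (fun _ he => he.2.2))

/-- **Statement 7.**  For an edge-free harmonic double cover `π : Γ̃ → Γ`:
(i) for every connected subgraph `Γ₀ = (S, T)`,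
`g̃(Γ₀) = g(Γ₀) - 1 + #{dilated vertices of Γ₀} ≥ -1`; and
(ii) for any set `F` of `h = g(Γ̃) - g(Γ)` undilated edges, the quantities
`g̃(Γᵢ)` of the connected components `Γᵢ` of `Γ ∖ F` sum to zero, hence either
some `g̃(Γᵢ) = -1` or all `g̃(Γᵢ) = 0`. -/
theorem gtilde_of_edgeFree
    (Gt G : MetricGraph) (dc : DoubleCover Gt G)
    (hGt : Gt.Connected) (hG : G.Connected) (hef : dc.IsEdgeFree) :
    (∀ (S : Set G.V) (T : Set G.E)
        (hs : ∀ e ∈ T, G.s e ∈ S) (ht : ∀ e ∈ T, G.t e ∈ S),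
      (G.subgraphOn S T hs ht).Connected →
        dc.gtilde S T = (G.subgraphOn S T hs ht).genus - 1
            + (Nat.card ({v : G.V | v ∈ S ∧ dc.dilatedV v}) : ℤ) ∧
        (-1 : ℤ) ≤ dc.gtilde S T) ∧
    (∀ F : Finset G.E,
      (F.card : ℤ) = Gt.genus - G.genus → (∀ e ∈ F, ¬ dc.dilatedE e) →
      ∀ R : Finset G.V,
        (∀ u : G.V, ∃! v : G.V, v ∈ R ∧ (G.deleteEdges (↑F)).Reach v u) →
        (∑ v ∈ R, dc.gtilde (G.compV (↑F) v) (G.compE (↑F) v)) = 0 ∧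
        ((∃ v ∈ R, dc.gtilde (G.compV (↑F) v) (G.compE (↑F) v) = -1) ∨
          ∀ v ∈ R, dc.gtilde (G.compV (↑F) v) (G.compE (↑F) v) = 0)) :=
  gtilde_of_edgeFree_general Gt G dc hef
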